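/- With the critical-locus setup for $n$ pairs of projections, the ideal inclusion $I(\mathcal{X}_r) \subseteq I(\mathcal{X}_n) : (I(C_{r+1}) \cdots I(C_n))$ holds, where $I(\mathcal{X}_m)$ is the ideal generated by the maximal minors of $M_{\mathcal{X}_m}$ and $I(C_j)$ is the ideal generated by the entries of $Q_j \cdot (x_0,\dots,x_k)^T$. -/

import Mathlib

/-!
It suffices to show `I(𝒳_m) · I(C_m) ⊆ I(𝒳_{m+1})` and induct on `n`. Given a maximal minor of
`M_{𝒳_m}` with rows `f` and a generator `ℓ = (Q_m x)_a` of `I(C_m)`, take the rows `f` together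
with row `a` of the new block of `M_{𝒳_{m+1}}`. The new column vanishes on the old rows, so this
minor is block lower triangular and equals the old minor times `ℓ`.
-/

open Matrix MvPolynomial

/-- The matrix `M_{𝒳_m}` with entries in the polynomial ring `F[x_0,…,x_k]`:
row blocks `[P i ∣ 0 ⋯ Q i ⬝ (x_0,…,x_k)ᵀ ⋯ 0]`, `i = 0, …, m-1`. -/
noncomputable def MpolyCrit (F : Type*) [Field F] (k : ℕ) (h : ℕ → ℕ)
    (P Q : (j : ℕ) → Matrix (Fin (h j + 1)) (Fin (k + 1)) F) (m : ℕ) :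
    Matrix ((i : Fin m) × Fin (h i + 1)) (Fin (k + 1) ⊕ Fin m)
      (MvPolynomial (Fin (k + 1)) F) :=
  fun p => Sum.elim (fun c => C (P p.1 p.2 c))
    (fun j => if j = p.1 then ∑ l, C (Q (p.1 : ℕ) p.2 l) * X l else 0)

/-- The ideal `I(𝒳_m)` generated by the maximal minors of `M_{𝒳_m}`. -/
noncomputable def IcritLocus (F : Type*) [Field F] (k : ℕ) (h : ℕ → ℕ)
    (P Q : (j : ℕ) → Matrix (Fin (h j + 1)) (Fin (k + 1)) F) (m : ℕ) :
    Ideal (MvPolynomial (Fin (k + 1)) F) :=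
  Ideal.span (Set.range fun f : (Fin (k + 1) ⊕ Fin m) → ((i : Fin m) × Fin (h i + 1)) =>
    ((MpolyCrit F k h P Q m).submatrix f id).det)

/-- The ideal `I(C_j)` of the center of `Q_j`, generated by the entries of
`Q_j ⬝ (x_0,…,x_k)ᵀ`. -/
noncomputable def Icenter (F : Type*) [Field F] (k : ℕ) (h : ℕ → ℕ)
    (Q : (j : ℕ) → Matrix (Fin (h j + 1)) (Fin (k + 1)) F) (j : ℕ) :
    Ideal (MvPolynomial (Fin (k + 1)) F) :=
  Ideal.span (Set.range fun a : Fin (h j + 1) => ∑ l, C (Q j a l) * X l)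

theorem Ideal.le_colon_of_mul_le {R : Type*} [CommSemiring R] {I J K : Ideal R} (h : I * J ≤ K) :
    I ≤ K.colon (J : Set R) :=
  fun _ hx => Submodule.mem_colon.2 fun _ hs => h (Ideal.mul_mem_mul hx hs)

section CriticalLocus

variable {F : Type*} [Field F] {k : ℕ} {h : ℕ → ℕ}
  {P Q : (j : ℕ) → Matrix (Fin (h j + 1)) (Fin (k + 1)) F}

def extendRows {m : ℕ} (f : Fin (k + 1) ⊕ Fin m → (i : Fin m) × Fin (h i + 1))
    (a : Fin (h m + 1)) :
    (Fin (k + 1) ⊕ Fin m) ⊕ Fin 1 → (i : Fin (m + 1)) × Fin (h i + 1) :=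
  Sum.elim (fun p => ⟨(f p).1.castSucc, (f p).2⟩) fun _ => ⟨Fin.last m, a⟩

def sumSuccEquiv (k m : ℕ) : (Fin (k + 1) ⊕ Fin m) ⊕ Fin 1 ≃ Fin (k + 1) ⊕ Fin (m + 1) :=
  (Equiv.sumAssoc _ _ _).trans ((Equiv.refl _).sumCongr finSumFinEquiv)

theorem det_submatrix_extendRows {m : ℕ}
    (f : Fin (k + 1) ⊕ Fin m → (i : Fin m) × Fin (h i + 1)) (a : Fin (h m + 1)) :
    ((MpolyCrit F k h P Q (m + 1)).submatrix (extendRows f a) (sumSuccEquiv k m)).det =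
      ((MpolyCrit F k h P Q m).submatrix f id).det * ∑ l, C (Q m a l) * X l := by
  set A := (MpolyCrit F k h P Q (m + 1)).submatrix (extendRows f a) (sumSuccEquiv k m)
  have h12 : A.toBlocks₁₂ = 0 := by
    refine Matrix.ext fun p i => ?_
    simp [A, Matrix.toBlocks₁₂, extendRows, sumSuccEquiv, MpolyCrit, Fin.ext_iff, (f p).1.isLt.ne']
  have h11 : A.toBlocks₁₁ = (MpolyCrit F k h P Q m).submatrix f id := by
    refine Matrix.ext fun p q => ?_
    cases q <;> simp [A, Matrix.toBlocks₁₁, extendRows, sumSuccEquiv, MpolyCrit, Fin.ext_iff]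
  have h22 : A.toBlocks₂₂.det = ∑ l, C (Q m a l) * X l := by
    simp [A, Matrix.toBlocks₂₂, extendRows, sumSuccEquiv, MpolyCrit, Fin.ext_iff]
  rw [← Matrix.fromBlocks_toBlocks A, h12, Matrix.det_fromBlocks_zero₁₂, h11, h22]

theorem IcritLocus_mul_Icenter_le (m : ℕ) :
    IcritLocus F k h P Q m * Icenter F k h Q m ≤ IcritLocus F k h P Q (m + 1) := by
  rw [IcritLocus, Icenter, Ideal.span_mul_span', Ideal.span_le]
  rintro _ ⟨_, ⟨f, rfl⟩, _, ⟨a, rfl⟩, rfl⟩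
  dsimp only
  rw [← det_submatrix_extendRows, ← Matrix.det_submatrix_equiv_self (sumSuccEquiv k m).symm,
    Matrix.submatrix_submatrix, Equiv.self_comp_symm]
  exact Ideal.subset_span ⟨_, rfl⟩

theorem IcritLocus_mul_prod_Icenter_le {r n : ℕ} (hrn : r ≤ n) :
    IcritLocus F k h P Q r * ∏ j ∈ Finset.Ico r n, Icenter F k h Q j ≤ IcritLocus F k h P Q n := by
  induction n, hrn using Nat.le_induction with
  | base => simp
  | succ m hrm ih =>
    rw [Finset.prod_Ico_succ_top hrm, ← mul_assoc]
    exact (Ideal.mul_mono_left ih).trans (IcritLocus_mul_Icenter_le m)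

end CriticalLocus

/-- scheme-theoretic nesting of critical loci,
`I(𝒳_r) ⊆ I(𝒳_n) : (I(C_{r+1}) ⋯ I(C_n))`. -/
theorem stmt3 {F : Type*} [Field F] (k r n : ℕ) (hrn : r < n) (h : ℕ → ℕ)
    (P Q : (j : ℕ) → Matrix (Fin (h j + 1)) (Fin (k + 1)) F) :
    IcritLocus F k h P Q r ≤
      Submodule.colon (IcritLocus F k h P Q n)
        ((∏ j ∈ Finset.Ico r n, Icenter F k h Q j : Ideal (MvPolynomial (Fin (k + 1)) F)) : Set (MvPolynomial (Fin (k + 1)) F)) := by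
  exact Ideal.le_colon_of_mul_le (IcritLocus_mul_prod_Icenter_le hrn.le)
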